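/- Let γ > −1 and α > −1 be real. For all nonnegative integers m, n with m > n, the solid weighted Cauchy transform of the disc polynomial R^γ_{m,n} vanishes identically: C_s^{ω_α}(R^γ_{m,n})(z) = 0 for every z ∈ ℂ with |z| > 1. -/

import Mathlib

open MeasureTheory Complex

/-- The open unit disc in `ℂ`. -/
def unitDisc : Set ℂ := {z : ℂ | ‖z‖ < 1}

/-- The solid weighted Cauchy transform `C_s^ω f (z) = (1/π) ∫_D f(ξ) ω(|ξ|²)/(z-ξ) dA(ξ)`. -/
noncomputable def solidCauchy (ω : ℝ → ℝ) (f : ℂ → ℂ) (z : ℂ) : ℂ :=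
  (Real.pi : ℂ)⁻¹ * ∫ ξ in unitDisc, f ξ * (ω (‖ξ‖ ^ 2) : ℂ) / (z - ξ)

/-- The Pochhammer symbol `(a)_k = a(a+1)⋯(a+k-1)`. -/
noncomputable def poch (a : ℝ) (k : ℕ) : ℝ := (ascPochhammer ℝ k).eval a

/-- The weight function `ω_α(t) = (1-t)^α`. -/
noncomputable def omegaW (α : ℝ) (t : ℝ) : ℝ := (1 - t) ^ α

/-- The disc polynomials `R^γ_{m,n}`. -/
noncomputable def discR (γ : ℝ) (m n : ℕ) (z : ℂ) : ℂ :=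
  (m.factorial : ℂ) * (n.factorial : ℂ) *
    ∑ j ∈ Finset.range (min m n + 1),
      ((-1 : ℂ) ^ j * (((1 - ‖z‖ ^ 2) ^ j : ℝ) : ℂ) * z ^ (m - j) *
          (starRingEnd ℂ) z ^ (n - j)) /
        ((j.factorial : ℂ) * (poch (γ + 1) j : ℂ) * ((m - j).factorial : ℂ) *
          ((n - j).factorial : ℂ))

/-!
For `|z| > 1` expand `1/(z - ξ) = ∑ₖ ξᵏ / z^(k+1)` on the disc; dominated convergence reduces the
claim to the vanishing of the moments `∫_D R^γ_{m,n}(ξ) ω(|ξ|²) ξᵏ dA(ξ)`. Under a rotation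
`ξ ↦ uξ` with `|u| = 1` this integrand picks up the factor `u^(m-n+k)`, and `m - n + k ≥ 1`, so
choosing `u` with `u^(m-n+k) = -1` and using rotation invariance of area measure shows that each
moment equals its own negative.
-/

open Set

theorem unitDisc_eq_ball : unitDisc = Metric.ball 0 1 := by
  ext; simp [unitDisc]

theorem measurableSet_unitDisc : MeasurableSet unitDisc :=
  unitDisc_eq_ball ▸ measurableSet_ball

theorem integral_comp_circle_mul {E : Type*} [NormedAddCommGroup E] [NormedSpace ℝ E]
    (f : ℂ → E) (u : Circle) : ∫ ξ, f (u * ξ) = ∫ ξ, f ξ := by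
  simpa [rotation_apply] using
    (rotation u).measurePreserving.integral_comp (rotation u).toHomeomorph.measurableEmbedding f

theorem integral_eq_zero_of_comp_circle_mul {E : Type*} [NormedAddCommGroup E]
    [NormedSpace ℂ E] {f : ℂ → E} {N : ℕ} (hN : N ≠ 0)
    (hf : ∀ (u : Circle) ξ, f (u * ξ) = (u : ℂ) ^ N • f ξ) : ∫ ξ, f ξ = 0 := by
  set u := Circle.exp (Real.pi / N)
  have hu : (u : ℂ) ^ N = -1 := by
    rw [Circle.coe_exp, ← Complex.exp_nat_mul]
    convert Complex.exp_pi_mul_I using 2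
    push_cast
    field_simp
  have h := integral_comp_circle_mul f u
  simp only [hf, hu, neg_one_smul, integral_neg] at h
  have h2 : (2 : ℂ) • ∫ ξ, f ξ = 0 := by
    rw [two_smul]
    nth_rewrite 1 [← h]
    exact neg_add_cancel _
  exact (smul_eq_zero.mp h2).resolve_left two_ne_zero

theorem pow_sub_mul_conj_pow_sub {u : ℂ} (hu : ‖u‖ = 1) {m n j : ℕ} (hjm : j ≤ m)
    (hjn : j ≤ n) :
    u ^ (m - j) * (starRingEnd ℂ) u ^ (n - j) = u ^ m * (starRingEnd ℂ) u ^ n := by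
  have hunit : u ^ j * (starRingEnd ℂ) u ^ j = 1 := by
    rw [← mul_pow, mul_conj, normSq_eq_norm_sq, hu]; norm_num
  obtain ⟨a, rfl⟩ := Nat.exists_eq_add_of_le hjm
  obtain ⟨b, rfl⟩ := Nat.exists_eq_add_of_le hjn
  simp only [Nat.add_sub_cancel_left, pow_add]
  linear_combination (-(u ^ a * (starRingEnd ℂ) u ^ b)) * hunit

theorem discR_mul (γ : ℝ) (m n : ℕ) {u : ℂ} (hu : ‖u‖ = 1) (ξ : ℂ) :
    discR γ m n (u * ξ) = u ^ m * (starRingEnd ℂ) u ^ n * discR γ m n ξ := by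
  simp only [discR, Finset.mul_sum, norm_mul, hu, one_mul, mul_pow, map_mul]
  refine Finset.sum_congr rfl fun j hj => ?_
  have hj : j ≤ min m n := Nat.lt_succ_iff.mp (Finset.mem_range.mp hj)
  rw [← pow_sub_mul_conj_pow_sub hu (hj.trans (min_le_left m n)) (hj.trans (min_le_right m n))]
  ring

theorem continuous_discR (γ : ℝ) (m n : ℕ) : Continuous (discR γ m n) := by
  unfold discR; fun_prop

theorem setIntegral_discR_mul_pow_eq_zero (γ : ℝ) {m n : ℕ} (hmn : n < m) (ω : ℝ → ℝ)
    (k : ℕ) : ∫ ξ in unitDisc, discR γ m n ξ * (ω (‖ξ‖ ^ 2) : ℂ) * ξ ^ k = 0 := by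
  rw [← integral_indicator measurableSet_unitDisc]
  refine integral_eq_zero_of_comp_circle_mul (N := m - n + k) (by omega) fun u ξ => ?_
  have hu : ‖(u : ℂ)‖ = 1 := Circle.norm_coe u
  have hrot : (u : ℂ) ^ m * (starRingEnd ℂ) u ^ n = (u : ℂ) ^ (m - n) := by
    simpa using (pow_sub_mul_conj_pow_sub hu hmn.le le_rfl).symm
  by_cases hξ : ξ ∈ unitDisc
  · have huξ : (u : ℂ) * ξ ∈ unitDisc := by simpa [unitDisc, hu] using hξ
    rw [indicator_of_mem huξ, indicator_of_mem hξ, discR_mul γ m n hu, hrot, smul_eq_mul,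
      norm_mul, hu, one_mul, pow_add]
    ring
  · have huξ : (u : ℂ) * ξ ∉ unitDisc := by simpa [unitDisc, hu] using hξ
    rw [indicator_of_notMem huξ, indicator_of_notMem hξ, smul_zero]

theorem integrableOn_omegaW_unitDisc {α : ℝ} (hα : -1 < α) :
    IntegrableOn (fun ξ : ℂ => omegaW α (‖ξ‖ ^ 2)) unitDisc := by
  rw [unitDisc_eq_ball, integrableOn_fun_norm_addHaar (volume : Measure ℂ)
    (f := fun r => omegaW α (r ^ 2)), Complex.finrank_real_complex]
  refine (intervalIntegral.integrableOn_deriv_of_nonneg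
    (g := fun r => -(1 - r ^ 2) ^ (α + 1) / (2 * (α + 1))) ?_ (fun r hr => ?_)
    (fun r hr => ?_)).mono_set Ioo_subset_Ioc_self
  · exact ((continuous_const.sub (continuous_pow 2)).continuousOn.rpow_const
      fun _ _ => Or.inr (by linarith)).neg.div_const _
  · have hpos : 0 < 1 - r ^ 2 := by nlinarith [hr.1, hr.2]
    have hα1 : α + 1 ≠ 0 := by linarith
    refine ((((hasDerivAt_pow 2 r).const_sub 1).rpow_const (p := α + 1)
      (Or.inl hpos.ne')).neg.div_const (2 * (α + 1))).congr_deriv ?_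
    simp only [omegaW, smul_eq_mul, add_sub_cancel_right, Nat.cast_ofNat]
    field_simp
  · exact smul_nonneg (pow_nonneg hr.1.le _)
      (Real.rpow_nonneg (by nlinarith [hr.1, hr.2]) _)

theorem integrableOn_discR_mul_omegaW (γ : ℝ) (m n : ℕ) {α : ℝ} (hα : -1 < α) :
    IntegrableOn (fun ξ => discR γ m n ξ * (omegaW α (‖ξ‖ ^ 2) : ℂ)) unitDisc :=
  IntegrableOn.continuousOn_mul_of_subset (continuous_discR γ m n).continuousOn
    (integrableOn_omegaW_unitDisc hα).ofReal (isCompact_closedBall 0 1) measurableSet_unitDisc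
    (unitDisc_eq_ball ▸ Metric.ball_subset_closedBall)

theorem hasSum_div_sub_of_norm_le {z ξ : ℂ} (hz : 1 < ‖z‖) (hξ : ‖ξ‖ ≤ 1) (c : ℂ) :
    HasSum (fun k : ℕ => c * ξ ^ k / z ^ (k + 1)) (c / (z - ξ)) := by
  have hz0 : z ≠ 0 := norm_pos_iff.mp (one_pos.trans hz)
  have hξz : ‖ξ / z‖ < 1 := by
    rw [norm_div, div_lt_one (one_pos.trans hz)]; linarith
  have hzξ : z - ξ ≠ 0 := sub_ne_zero.mpr fun h => by rw [h] at hz; linarith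
  have hterm : (fun k : ℕ => c * ξ ^ k / z ^ (k + 1)) = fun k => c / z * (ξ / z) ^ k := by
    ext k; rw [div_pow, pow_succ]; field_simp
  have hlim : c / (z - ξ) = c / z * (1 - ξ / z)⁻¹ := by field_simp
  rw [hterm, hlim]
  exact (hasSum_geometric_of_norm_lt_one hξz).mul_left (c / z)

theorem integral_div_sub_eq_zero_of_moments {μ : Measure ℂ} {g : ℂ → ℂ} (hg : Integrable g μ)
    (hsupp : ∀ᵐ ξ ∂μ, ‖ξ‖ ≤ 1) (hmom : ∀ k : ℕ, ∫ ξ, g ξ * ξ ^ k ∂μ = 0) {z : ℂ}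
    (hz : 1 < ‖z‖) : ∫ ξ, g ξ / (z - ξ) ∂μ = 0 := by
  set r := ‖z‖⁻¹
  have hr0 : 0 ≤ r := by positivity
  have hr1 : r < 1 := inv_lt_one_of_one_lt₀ hz
  have hsum : HasSum (fun k : ℕ => ∫ ξ, g ξ * ξ ^ k / z ^ (k + 1) ∂μ)
      (∫ ξ, g ξ / (z - ξ) ∂μ) := by
    refine hasSum_integral_of_dominated_convergence (fun k ξ => ‖g ξ‖ * r * r ^ k)
      (fun k => by fun_prop) (fun k => ?_) (.of_forall fun ξ => ?_) ?_
      (hsupp.mono fun ξ hξ => hasSum_div_sub_of_norm_le hz hξ (g ξ))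
    · filter_upwards [hsupp] with ξ hξ
      calc ‖g ξ * ξ ^ k / z ^ (k + 1)‖ = ‖g ξ‖ * r * r ^ k * ‖ξ‖ ^ k := by
            simp only [r, norm_div, norm_mul, norm_pow, inv_pow]; field_simp; ring
        _ ≤ ‖g ξ‖ * r * r ^ k :=
            mul_le_of_le_one_right (by positivity) (pow_le_one₀ (norm_nonneg _) hξ)
    · exact (summable_geometric_of_lt_one hr0 hr1).mul_left _
    · simp_rw [tsum_mul_left, tsum_geometric_of_lt_one hr0 hr1]
      exact (hg.norm.mul_const r).mul_const _
  have hterm (k : ℕ) : ∫ ξ, g ξ * ξ ^ k / z ^ (k + 1) ∂μ = 0 := by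
    rw [integral_div, hmom, zero_div]
  simp only [hterm] at hsum
  exact hsum.unique hasSum_zero

theorem solidCauchy_discR_of_gt_general (γ α : ℝ) (hα : -1 < α)
    (m n : ℕ) (hmn : n < m) (z : ℂ) (hz : 1 < ‖z‖) :
    solidCauchy (omegaW α) (discR γ m n) z = 0 := by
  have hsupp : ∀ᵐ ξ ∂volume.restrict unitDisc, ‖ξ‖ ≤ 1 :=
    ae_restrict_of_forall_mem measurableSet_unitDisc fun _ hξ => hξ.le
  rw [solidCauchy, integral_div_sub_eq_zero_of_moments (integrableOn_discR_mul_omegaW γ m n hα)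
    hsupp (setIntegral_discR_mul_pow_eq_zero γ hmn (omegaW α)) hz, mul_zero]

theorem solidCauchy_discR_of_gt (γ α : ℝ) (hγ : -1 < γ) (hα : -1 < α)
    (m n : ℕ) (hmn : n < m) (z : ℂ) (hz : 1 < ‖z‖) :
    solidCauchy (omegaW α) (discR γ m n) z = 0 :=
  solidCauchy_discR_of_gt_general γ α hα m n hmn z hz
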